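/- Let a, b ∈ [0, ∞] satisfy 0 ≤ a ≤ 4b and 0 < b ≤ ∞. Then K_{a,b}(x) < 0 for every x ∈ ℝ³ with x ≠ 0. Moreover, if 0 < a ≤ 2b < ∞, the radial profile k_{a,b}(r) = (1/r)((4/3)e^{−br} − (1/3)e^{−ar} − 1) is nondecreasing on (0, ∞). -/

import Mathlib

open MeasureTheory Real Filter Topology ENNReal

noncomputable section

/-- Euclidean space `ℝ³`. -/
abbrev E3 : Type := EuclideanSpace ℝ (Fin 3)

/-- `expNeg a t = e^{-a t}` for `a ∈ [0, ∞]`, with the conventions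
`e^{-0 t} = 1` and `e^{-∞ t} = 0`. -/
def expNeg (a : ℝ≥0∞) (t : ℝ) : ℝ :=
  if a = ∞ then 0 else Real.exp (-(a.toReal * t))

/-- The kernel `K_{a,b}(x) = (1/|x|)((4/3)e^{-b|x|} - (1/3)e^{-a|x|} - 1)`. -/
def Kker (a b : ℝ≥0∞) (x : E3) : ℝ :=
  (1 / ‖x‖) * ((4 / 3) * expNeg b ‖x‖ - (1 / 3) * expNeg a ‖x‖ - 1)

/-- The Sobolev space `H¹(ℝ³)` of real valued `L²` functions with weak gradient in `L²`,
presented with an explicit weak gradient. -/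
structure H1 where
  toFun : E3 → ℝ
  grad : E3 → E3
  memL2 : MemLp toFun 2 (volume : Measure E3)
  grad_memL2 : MemLp grad 2 (volume : Measure E3)
  weak_grad : ∀ φ : E3 → ℝ, ContDiff ℝ (⊤ : ℕ∞) φ → HasCompactSupport φ →
    ∀ i : Fin 3,
      ∫ x : E3, toFun x * fderiv ℝ φ x (EuclideanSpace.single i 1)
        = - ∫ x : E3, grad x i * φ x

/-- Dirichlet energy `A(u) = ∫ |∇u|²`. -/
def Aen (u : H1) : ℝ := ∫ x : E3, ‖u.grad x‖ ^ 2

/-- Mass `∫ u²`. -/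
def mass (u : H1) : ℝ := ∫ x : E3, (u.toFun x) ^ 2

/-- `𝒦_{a,b}(u) = ∫∫ K_{a,b}(x-y) u(x)² u(y)² dx dy`. -/
def Kform (a b : ℝ≥0∞) (u : H1) : ℝ :=
  ∫ x : E3, ∫ y : E3, Kker a b (x - y) * (u.toFun x) ^ 2 * (u.toFun y) ^ 2

/-- The autonomous energy functional `ℰ⁰_{a,b}`. -/
def energy0 (a b : ℝ≥0∞) (u : H1) : ℝ := (1 / 2) * Aen u + (1 / 4) * Kform a b u

/-- The mass constraint set `S(μ)`. -/
def Sset (μ : ℝ) : Set H1 := {u | mass u = μ}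

/-- The autonomous ground-state energy `E⁰_{a,b}(μ)`. -/
def E0 (a b : ℝ≥0∞) (μ : ℝ) : ℝ := sInf (energy0 a b '' Sset μ)

/-- `𝒱(u) = ∫ V u²`. -/
def Vform (V : E3 → ℝ) (u : H1) : ℝ := ∫ x : E3, V x * (u.toFun x) ^ 2

/-- The nonautonomous energy functional `ℰ^V_{a,b}`. -/
def energyV (V : E3 → ℝ) (a b : ℝ≥0∞) (u : H1) : ℝ :=
  (1 / 2) * Aen u + (1 / 2) * Vform V u + (1 / 4) * Kform a b u

/-- The nonautonomous ground-state energy `E^V_{a,b}(μ)`. -/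
def EV (V : E3 → ℝ) (a b : ℝ≥0∞) (μ : ℝ) : ℝ := sInf (energyV V a b '' Sset μ)

/-- Hypothesis (H1): `V ∈ L^{3/2} + L^∞`. -/
def HypH1 (V : E3 → ℝ) : Prop :=
  ∃ W₁ W₂ : E3 → ℝ, V = W₁ + W₂ ∧ MemLp W₁ (3 / 2) (volume : Measure E3) ∧
    MemLp W₂ ∞ (volume : Measure E3)

/-- Hypothesis (H2): `V` vanishes at infinity. -/
def HypH2 (V : E3 → ℝ) : Prop :=
  ∀ c : ℝ, 0 < c → volume {x : E3 | c < |V x|} < ∞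


lemma phi_anti' {t1 t2 : ℝ} (h0 : 0 ≤ t1) (h : t1 ≤ t2) :
    Real.exp (-t2) * (1 + t2) ≤ Real.exp (-t1) * (1 + t1) := by
  have h2 : Real.exp (-t1) = Real.exp (-t2) * Real.exp (t2 - t1) := by
    rw [← Real.exp_add]; ring_nf
  have h1 : 1 + (t2 - t1) ≤ Real.exp (t2 - t1) := by
    linarith [Real.add_one_le_exp (t2 - t1)]
  have hE : Real.exp (-t2) * (1 + (t2 - t1)) ≤ Real.exp (-t1) := by
    rw [h2]
    exact mul_le_mul_of_nonneg_left h1 (Real.exp_pos _).le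
  nlinarith [Real.exp_pos (-t2), mul_nonneg (mul_nonneg (Real.exp_pos (-t2)).le (sub_nonneg.mpr h)) h0]

lemma gmono' (s : ℝ) (hs : 0 ≤ s) :
    4 * Real.exp (-s) * (1 + s) ≤ 3 + Real.exp (-(2*s)) * (1 + 2*s) := by
  set g : ℝ → ℝ := fun s => 3 + Real.exp (-(2*s)) * (1 + 2*s) - 4 * (Real.exp (-s) * (1 + s)) with hg
  have hder : ∀ t : ℝ, HasDerivAt g (4*t*Real.exp (-t) - 4*t*Real.exp (-(2*t))) t := by
    intro t
    have h1 : HasDerivAt (fun t : ℝ => -(2*t)) (-2) t := by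
      simpa [Pi.neg_def] using ((hasDerivAt_id t).const_mul (2:ℝ)).neg
    have h2 : HasDerivAt (fun t : ℝ => Real.exp (-(2*t))) (Real.exp (-(2*t)) * (-2)) t := h1.exp
    have h3 : HasDerivAt (fun t : ℝ => -t) (-1) t := (hasDerivAt_id t).neg
    have h4 : HasDerivAt (fun t : ℝ => Real.exp (-t)) (Real.exp (-t) * (-1)) t := h3.exp
    have h5 : HasDerivAt (fun t : ℝ => 1 + 2*t) 2 t := by
      simpa using ((hasDerivAt_id t).const_mul (2:ℝ)).const_add 1
    have h6 : HasDerivAt (fun t : ℝ => 1 + t) 1 t := by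
      simpa using (hasDerivAt_id t).const_add (1:ℝ)
    have h7 := (h2.mul h5).const_add (3:ℝ)
    have h8 := (h4.mul h6).const_mul (4:ℝ)
    have := h7.sub h8
    exact this.congr_deriv (by ring)
  have hmono : MonotoneOn g (Set.Ici 0) := by
    apply monotoneOn_of_deriv_nonneg (convex_Ici 0)
    · exact fun t _ => ((hder t).differentiableAt).continuousAt.continuousWithinAt
    · exact fun t _ => ((hder t).differentiableAt).differentiableWithinAt
    · intro t ht
      rw [interior_Ici] at ht
      replace ht : 0 < t := ht
      rw [(hder t).deriv]
      have h1 : Real.exp (-(2*t)) ≤ Real.exp (-t) := by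
        apply Real.exp_le_exp.mpr; linarith [ht.le, ht]
      nlinarith [ht.le, ht]
  have := hmono (Set.self_mem_Ici) (Set.mem_Ici.mpr hs) hs
  simp only [hg] at this
  simp at this
  linarith [this]

lemma keyineq' {al be r : ℝ} (ha : 0 ≤ al) (hab : al ≤ 2*be) (hr : 0 < r) :
    4 * Real.exp (-(be*r)) * (1 + be*r) ≤ 3 + Real.exp (-(al*r)) * (1 + al*r) := by
  have hbe : 0 ≤ be*r := by nlinarith
  have h1 : Real.exp (-(2*(be*r))) * (1 + 2*(be*r)) ≤ Real.exp (-(al*r)) * (1 + al*r) := by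
    apply phi_anti' (mul_nonneg ha hr.le)
    nlinarith
  have h2 := gmono' (be*r) hbe
  linarith


/-- if `0 ≤ a ≤ 4b` and `0 < b ≤ ∞` then `K_{a,b} < 0` away from the
origin; moreover, if `0 < a ≤ 2b < ∞` the radial profile `k_{a,b}` is nondecreasing
on `(0, ∞)`. -/
theorem stmt19 (a b : ℝ≥0∞) (hab : a ≤ 4 * b) (hb : 0 < b) :
    (∀ x : E3, x ≠ 0 → Kker a b x < 0) ∧
    (0 < a → a ≤ 2 * b → 2 * b < ∞ →
      MonotoneOn (fun r : ℝ =>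
          (1 / r) * ((4 / 3) * expNeg b r - (1 / 3) * expNeg a r - 1))
        (Set.Ioi (0 : ℝ))) := by
  constructor
  · intro x hx
    have hr : (0:ℝ) < ‖x‖ := norm_pos_iff.mpr hx
    set r := ‖x‖
    have hneg : (4 / 3) * expNeg b r - (1 / 3) * expNeg a r - 1 < 0 := by
      have hexpa_nonneg : 0 ≤ expNeg a r := by
        unfold expNeg; split
        · exact le_refl 0
        · exact (Real.exp_pos _).le
      by_cases hbt : b = ⊤
      · have hb0 : expNeg b r = 0 := by simp [expNeg, hbt]
        rw [hb0]; linarith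
      · have hat : a ≠ ⊤ := by
          intro h
          rw [h, top_le_iff] at hab
          exact (ENNReal.mul_ne_top (by simp) hbt) hab
        have hbpos : 0 < b.toReal := ENNReal.toReal_pos hb.ne' hbt
        have hle : a.toReal ≤ 4 * b.toReal := by
          have := ENNReal.toReal_mono (ENNReal.mul_ne_top (by simp) hbt) hab
          rwa [ENNReal.toReal_mul, ENNReal.toReal_ofNat] at this
        simp only [expNeg, if_neg hat, if_neg hbt]
        set v := Real.exp (-(b.toReal * r)) with hv
        set w := Real.exp (-(a.toReal * r)) with hw
        have hv1 : v < 1 := by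
          rw [hv, Real.exp_lt_one_iff]
          nlinarith
        have hv0 : 0 < v := Real.exp_pos _
        have hwv : v^4 ≤ w := by
          rw [hv, hw, ← Real.exp_nat_mul]
          apply Real.exp_le_exp.mpr
          push_cast
          nlinarith
        nlinarith [mul_pos_of_neg_of_neg (sub_neg.mpr hv1) (sub_neg.mpr hv1), sq_nonneg v, sq_nonneg (v+1), hv0.le]
    have : (0:ℝ) < 1 / r := by positivity
    calc Kker a b x = (1/r) * ((4 / 3) * expNeg b r - (1 / 3) * expNeg a r - 1) := rfl
    _ < 0 := mul_neg_of_pos_of_neg this hneg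
  · intro ha0 ha2b h2b
    have hbt : b ≠ ⊤ := by
      intro h; rw [h] at h2b; simp at h2b
    have hat : a ≠ ⊤ := (ha2b.trans_lt h2b).ne
    set al := a.toReal with hal
    set be := b.toReal with hbe
    have hapos : 0 < al := ENNReal.toReal_pos ha0.ne' hat
    have hble : al ≤ 2 * be := by
      have := ENNReal.toReal_mono (ENNReal.mul_ne_top (by simp) hbt) ha2b
      rwa [ENNReal.toReal_mul, ENNReal.toReal_ofNat] at this
    have hbpos : 0 < be := by nlinarith
    have hfun : (fun r : ℝ => (1 / r) * ((4 / 3) * expNeg b r - (1 / 3) * expNeg a r - 1))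
        = fun r : ℝ => (1 / r) * ((4 / 3) * Real.exp (-(be * r)) - (1 / 3) * Real.exp (-(al * r)) - 1) := by
      funext r
      simp only [expNeg, if_neg hat, if_neg hbt]
      rfl
    rw [hfun]
    set f : ℝ → ℝ := fun r => (1 / r) * ((4 / 3) * Real.exp (-(be * r)) - (1 / 3) * Real.exp (-(al * r)) - 1) with hf
    have hder : ∀ r : ℝ, 0 < r → HasDerivAt f
        (-(r^2)⁻¹ * ((4 / 3) * Real.exp (-(be * r)) - (1 / 3) * Real.exp (-(al * r)) - 1)
          + (1/r) * ((4 / 3) * (Real.exp (-(be * r)) * (-be)) - (1 / 3) * (Real.exp (-(al * r)) * (-al)))) r := by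
      intro r hr
      have hinv : HasDerivAt (fun x : ℝ => 1/x) (-(r^2)⁻¹) r := by
        simpa [one_div] using hasDerivAt_inv hr.ne'
      have hb1 : HasDerivAt (fun x : ℝ => -(be*x)) (-be) r := by
        simpa [Pi.neg_def] using ((hasDerivAt_id r).const_mul be).neg
      have ha1 : HasDerivAt (fun x : ℝ => -(al*x)) (-al) r := by
        simpa [Pi.neg_def] using ((hasDerivAt_id r).const_mul al).neg
      have hh : HasDerivAt (fun x : ℝ => (4 / 3) * Real.exp (-(be * x)) - (1 / 3) * Real.exp (-(al * x)) - 1)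
          ((4 / 3) * (Real.exp (-(be * r)) * (-be)) - (1 / 3) * (Real.exp (-(al * r)) * (-al))) r := by
        exact ((hb1.exp.const_mul (4/3:ℝ)).sub (ha1.exp.const_mul (1/3:ℝ))).sub_const 1
      exact hinv.mul hh
    apply monotoneOn_of_deriv_nonneg (convex_Ioi 0)
    · intro t ht
      exact ((hder t ht).differentiableAt).continuousAt.continuousWithinAt
    · intro t ht
      rw [interior_Ioi] at ht
      exact ((hder t ht).differentiableAt).differentiableWithinAt
    · intro r hrr
      rw [interior_Ioi] at hrr
      have hr : (0:ℝ) < r := hrr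
      rw [(hder r hr).deriv]
      set v := Real.exp (-(be * r)) with hv
      set w := Real.exp (-(al * r)) with hw
      have hkey := keyineq' hapos.le hble hr
      rw [← hv, ← hw] at hkey
      have heq : (-(r^2)⁻¹ * ((4 / 3) * v - (1 / 3) * w - 1)
          + (1/r) * ((4 / 3) * (v * (-be)) - (1 / 3) * (w * (-al))))
          = (r^2)⁻¹ * ((3 + w * (1 + al*r) - 4 * v * (1 + be*r))/3) := by
        field_simp
        ring
      rw [heq]
      apply mul_nonneg (by positivity)
      linarith
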